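/- arXiv:2202.00708 — 2 statements merged into one kernel-verified Lean document; each statement's English description precedes it below -/
import Mathlib

section
/- Let α be a composition of n. The relation ≼ on SIT(α), defined by T_1 ≼ T_2 iff there exist indices i_1,…,i_r (possibly r = 0) such that successively applying π_{i_1}^{RS*},…,π_{i_r}^{RS*} to T_1 yields T_2, is a partial order on SIT(α): it is reflexive, transitive, and antisymmetric. -/
open Classical

namespace ImmHecke

/-- A filling assigns a natural-number entry to each cell `(row, column)` (0-indexed);
row `0` is the bottom row.  Cells outside the diagram carry the junk value `0`. -/
abbrev Filling : Type := ℕ × ℕ → ℕ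

/-- `c` is a cell of the diagram of the composition `α` (0-indexed rows and columns;
row `i` has `α_i` cells). -/
def IsCell (α : List ℕ) (c : ℕ × ℕ) : Prop :=
  c.1 < α.length ∧ c.2 < α.getD c.1 0

/-- `α` is a composition of `n`: a list of positive integers summing to `n`. -/
def IsComposition (α : List ℕ) (n : ℕ) : Prop :=
  (∀ a ∈ α, 0 < a) ∧ α.sum = n

/-- `T` is a bijective filling of the diagram of `α` with the entries `1, …, n`
(where `n = α.sum`), and with value `0` off the diagram. -/
def IsStdFilling (α : List ℕ) (T : Filling) : Prop :=
  (∀ c, ¬ IsCell α c → T c = 0) ∧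
  (∀ c, IsCell α c → 1 ≤ T c ∧ T c ≤ α.sum) ∧
  (∀ c c', IsCell α c → IsCell α c' → T c = T c' → c = c') ∧
  (∀ m, 1 ≤ m → m ≤ α.sum → ∃ c, IsCell α c ∧ T c = m)

/-- A standard immaculate tableau of shape `α`: a bijective standard filling whose
first-column entries strictly increase bottom to top and whose rows strictly
increase left to right. -/
def IsSIT (α : List ℕ) (T : Filling) : Prop :=
  IsStdFilling α T ∧
  (∀ i i' : ℕ, IsCell α (i, 0) → IsCell α (i', 0) → i < i' → T (i, 0) < T (i', 0)) ∧
  (∀ i j j' : ℕ, IsCell α (i, j) → IsCell α (i, j') → j < j' → T (i, j) < T (i, j'))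

/-- A standard extended tableau of shape `α`: a bijective standard filling whose rows
strictly increase left to right and all of whose columns strictly increase
bottom to top.  Note `SET(α) ⊆ SIT(α)`. -/
def IsSET (α : List ℕ) (T : Filling) : Prop :=
  IsStdFilling α T ∧
  (∀ i j j' : ℕ, IsCell α (i, j) → IsCell α (i, j') → j < j' → T (i, j) < T (i, j')) ∧
  (∀ i i' j : ℕ, IsCell α (i, j) → IsCell α (i', j) → i < i' → T (i, j) < T (i', j))

/-- `SIT*(α)`: standard immaculate tableaux whose first column contains exactly the
entries `1, 2, …, ℓ(α)`. -/
def IsSITstar (α : List ℕ) (T : Filling) : Prop :=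
  IsSIT α T ∧
  (∀ i, IsCell α (i, 0) → 1 ≤ T (i, 0) ∧ T (i, 0) ≤ α.length) ∧
  (∀ m, 1 ≤ m → m ≤ α.length → ∃ i, IsCell α (i, 0) ∧ T (i, 0) = m)

/-- In `T`, the entry `m+1` lies in a row strictly above the row of `m`. -/
def SuccAbove (α : List ℕ) (T : Filling) (m : ℕ) : Prop :=
  ∃ c c', IsCell α c ∧ IsCell α c' ∧ T c = m ∧ T c' = m + 1 ∧ c.1 < c'.1

/-- In `T`, the entries `m` and `m+1` lie in the same row. -/
def SuccSameRow (α : List ℕ) (T : Filling) (m : ℕ) : Prop :=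
  ∃ c c', IsCell α c ∧ IsCell α c' ∧ T c = m ∧ T c' = m + 1 ∧ c.1 = c'.1

/-- In `T`, the entry `m+1` lies in a row strictly below the row of `m`. -/
def SuccBelow (α : List ℕ) (T : Filling) (m : ℕ) : Prop :=
  ∃ c c', IsCell α c ∧ IsCell α c' ∧ T c = m ∧ T c' = m + 1 ∧ c'.1 < c.1

/-- In `T`, the entries `m` and `m+1` are both in the first column. -/
def BothFirstColumn (α : List ℕ) (T : Filling) (m : ℕ) : Prop :=
  ∃ c c', IsCell α c ∧ IsCell α c' ∧ T c = m ∧ T c' = m + 1 ∧ c.2 = 0 ∧ c'.2 = 0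

/-- `s_i(T)`: exchange the entries `i` and `i+1` of `T`. -/
def swapEntries (i : ℕ) (T : Filling) : Filling :=
  fun c => if T c = i then i + 1 else if T c = i + 1 then i else T c

/-- The row-strict dual immaculate 0-Hecke operator `π_i^{RS*}` on `SIT(α) ∪ {0}`
(`0` is encoded as `none`): `π_i(T) = T` if `i+1` is strictly above `i`;
`π_i(T) = 0` if `i` and `i+1` are in the same row; `π_i(T) = s_i(T)` if `i+1` is
strictly below `i`. -/
noncomputable def piRS (α : List ℕ) (i : ℕ) : Option Filling → Option Filling
  | none => none
  | some T =>
    if SuccAbove α T i then some T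
    else if SuccSameRow α T i then none
    else some (swapEntries i T)

/-- The dual immaculate 0-Hecke operator `π_i^{S*}` on `SIT(α) ∪ {0}`:
`π_i(T) = T` if `i+1` is in a row weakly below `i`; `π_i(T) = 0` if `i` and `i+1`
are both in the first column; `π_i(T) = s_i(T)` if `i+1` is strictly above `i`
and `i, i+1` are not both in the first column. -/
noncomputable def piS (α : List ℕ) (i : ℕ) : Option Filling → Option Filling
  | none => none
  | some T =>
    if SuccSameRow α T i ∨ SuccBelow α T i then some T
    else if BothFirstColumn α T i then none
    else some (swapEntries i T)

/-- The 0-Hecke operator `π_i^{A*}` on `SIT(α)`: `π_i(T) = T` if `i+1` is strictly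
above `i` or in the same row as `i`; `π_i(T) = s_i(T)` if `i+1` is strictly below `i`. -/
noncomputable def piA (α : List ℕ) (i : ℕ) (T : Filling) : Filling :=
  if SuccBelow α T i then swapEntries i T else T

/-- The 0-Hecke operator `π_i^{Ā*}` on `SIT(α) ∪ {0}`: `π_i(T) = T` if `i+1` is
strictly below `i`; `π_i(T) = 0` if `i` and `i+1` are in the same row or both in
the first column; `π_i(T) = s_i(T)` if `i+1` is strictly above `i` and `i, i+1`
are not both in the first column. -/
noncomputable def piAbar (α : List ℕ) (i : ℕ) : Option Filling → Option Filling
  | none => none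
  | some T =>
    if SuccBelow α T i then some T
    else if SuccSameRow α T i ∨ BothFirstColumn α T i then none
    else some (swapEntries i T)

/-- `x` belongs to `SIT(α) ∪ {0}` (with `0 = none`). -/
def InSITZ (α : List ℕ) (x : Option Filling) : Prop :=
  ∀ T, x = some T → IsSIT α T

/-- Successively apply the operators `π_{i_1}^{RS*}, …, π_{i_r}^{RS*}` (the list `l = [i_1, …, i_r]`). -/
noncomputable def applySeqRS (α : List ℕ) (l : List ℕ) (x : Option Filling) : Option Filling :=
  l.foldl (fun y i => piRS α i y) x

/-- Successively apply the operators `π_{i_1}^{S*}, …, π_{i_r}^{S*}`. -/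
noncomputable def applySeqS (α : List ℕ) (l : List ℕ) (x : Option Filling) : Option Filling :=
  l.foldl (fun y i => piS α i y) x

/-- The relation `T₁ ≼ T₂` on `SIT(α)`: some sequence of operators `π_i^{RS*}`
(indices in `{1, …, n-1}`, possibly empty) sends `T₁` to `T₂`. -/
def preRS (α : List ℕ) (T₁ T₂ : Filling) : Prop :=
  ∃ l : List ℕ, (∀ i ∈ l, 1 ≤ i ∧ i ≤ α.sum - 1) ∧ applySeqRS α l (some T₁) = some T₂

/-- The one-line notation of `σ(T)`: read the entries of `T` from right to left in
each row, rows from top to bottom. -/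
def readingWord (α : List ℕ) (T : Filling) : List ℕ :=
  ((List.range α.length).reverse).flatMap
    (fun i => ((List.range (α.getD i 0)).map fun j => T (i, j)).reverse)

/-- The number of inversions of a word `w`: pairs of positions `p < q` with `w p > w q`. -/
def inversions (w : List ℕ) : ℕ :=
  ((Finset.range w.length ×ˢ Finset.range w.length).filter
    (fun pq : ℕ × ℕ => pq.1 < pq.2 ∧ w.getD pq.2 0 < w.getD pq.1 0)).card

/-- `S⁰_α`: first column contains `1, …, ℓ` bottom to top; the remaining cells are
filled with `ℓ+1, …, n` consecutively, reading rows from top to bottom and left to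
right within each row. -/
noncomputable def S0 (α : List ℕ) : Filling := fun c =>
  if IsCell α c then
    if c.2 = 0 then c.1 + 1
    else
      α.length + (((List.range α.length).filter fun r => c.1 < r).map fun r => α.getD r 0 - 1).sum + c.2
  else 0

/-- `S^{row}_α`: the row superstandard tableau, entries `1, …, n` placed consecutively
reading rows bottom to top, left to right within each row. -/
noncomputable def Srow (α : List ℕ) : Filling := fun c =>
  if IsCell α c then (α.take c.1).sum + c.2 + 1 else 0

/-- `S^{row*}_α`: first column contains `1, …, ℓ` bottom to top; the remaining cells
are filled with `ℓ+1, …, n` consecutively, reading rows bottom to top, left to right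
within each row. -/
noncomputable def SrowStar (α : List ℕ) : Filling := fun c =>
  if IsCell α c then
    if c.2 = 0 then c.1 + 1
    else α.length + ((List.range c.1).map fun r => α.getD r 0 - 1).sum + c.2
  else 0

/-- `S^{col}_α`: the column superstandard tableau, entries `1, …, n` placed
consecutively reading columns bottom to top, columns left to right. -/
noncomputable def Scol (α : List ℕ) : Filling := fun c =>
  if IsCell α c then
    ((List.range c.2).map fun j' =>
        ((List.range α.length).filter fun r => j' < α.getD r 0).length).sum
      + ((List.range c.1).filter fun r => c.2 < α.getD r 0).length + 1
  else 0

/-- The image of a basis element of `V_α` under the linearly extended operator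
`π_i^{RS*}` (the value `0` of the operator is interpreted as the zero vector). -/
noncomputable def piTargetRS (α : List ℕ) (i : ℕ) (T : {T : Filling // IsSIT α T}) :
    ({T : Filling // IsSIT α T} →₀ ℚ) :=
  match piRS α i (some T.val) with
  | none => 0
  | some T' => if h : IsSIT α T' then Finsupp.single ⟨T', h⟩ 1 else 0

/-- The operator `π_i^{RS*}` extended to a `ℚ`-linear endomorphism of the free
`ℚ`-vector space `V_α` with basis `SIT(α)`. -/
noncomputable def piRSLin (α : List ℕ) (i : ℕ) :
    ({T : Filling // IsSIT α T} →₀ ℚ) →ₗ[ℚ] ({T : Filling // IsSIT α T} →₀ ℚ) :=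
  Finsupp.lsum ℚ fun T => LinearMap.toSpanSingleton ℚ _ (piTargetRS α i T)

/-- The image of a basis element of `Z_α` under the linearly extended operator
`π_i^{RS*}`. -/
noncomputable def piTargetSET (α : List ℕ) (i : ℕ) (T : {T : Filling // IsSET α T}) :
    ({T : Filling // IsSET α T} →₀ ℚ) :=
  match piRS α i (some T.val) with
  | none => 0
  | some T' => if h : IsSET α T' then Finsupp.single ⟨T', h⟩ 1 else 0

/-- The operator `π_i^{RS*}` extended to a `ℚ`-linear endomorphism of the free
`ℚ`-vector space `Z_α` with basis `SET(α)`. -/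
noncomputable def piRSLinSET (α : List ℕ) (i : ℕ) :
    ({T : Filling // IsSET α T} →₀ ℚ) →ₗ[ℚ] ({T : Filling // IsSET α T} →₀ ℚ) :=
  Finsupp.lsum ℚ fun T => LinearMap.toSpanSingleton ℚ _ (piTargetSET α i T)

/-
A non-trivial step of `π_i^{RS*}` happens only when `i + 1` lies strictly below `i`, and it
exchanges them; so it raises the weight `∑ row(c) · T(c)` by the difference of the two rows,
while a trivial step leaves `T` unchanged. Along any chain of operators the weight therefore
increases strictly unless the tableau never changes, which gives antisymmetry; reflexivity and
transitivity come from the empty and the concatenated index sequences. The weight argument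
works for all bijective fillings, a class that `π_i^{RS*}` preserves.
-/

lemma _root_.List.getD_le_sum (l : List ℕ) (k : ℕ) : l.getD k 0 ≤ l.sum := by
  rw [List.getD_eq_getElem?_getD]
  cases h : l[k]? with
  | none => simp
  | some a => exact List.le_sum_of_mem (List.mem_of_getElem? h)

lemma swapEntries_eq_swap_comp (i : ℕ) (T : Filling) :
    swapEntries i T = Equiv.swap i (i + 1) ∘ T := by
  funext c
  simp [swapEntries, Equiv.swap_apply_def]

lemma IsStdFilling.apply_eq_iff {α : List ℕ} {T : Filling} (hT : IsStdFilling α T)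
    {c : ℕ × ℕ} (hc : IsCell α c) (d : ℕ × ℕ) : T d = T c ↔ d = c := by
  refine ⟨fun h => ?_, fun h => h ▸ rfl⟩
  by_cases hd : IsCell α d
  · exact hT.2.2.1 d c hd hc h
  · have := hT.2.1 c hc
    rw [hT.1 d hd] at h
    omega

lemma IsStdFilling.perm_comp {α : List ℕ} {T : Filling} (hT : IsStdFilling α T)
    (σ : Equiv.Perm ℕ) (h0 : σ 0 = 0)
    (hσ : ∀ m, 1 ≤ σ m ∧ σ m ≤ α.sum ↔ 1 ≤ m ∧ m ≤ α.sum) :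
    IsStdFilling α (σ ∘ T) := by
  obtain ⟨hzero, hrange, hinj, hsurj⟩ := hT
  refine ⟨fun c hc => ?_, fun c hc => (hσ _).2 (hrange c hc),
    fun c c' hc hc' h => hinj c c' hc hc' (σ.injective h), fun m hm1 hm2 => ?_⟩
  · simp [hzero c hc, h0]
  · obtain ⟨c, hc, hTc⟩ := hsurj (σ.symm m) ((hσ _).1 (by simpa using ⟨hm1, hm2⟩)).1
      ((hσ _).1 (by simpa using ⟨hm1, hm2⟩)).2
    exact ⟨c, hc, by simp [hTc]⟩

lemma IsStdFilling.swapEntries {α : List ℕ} {T : Filling} (hT : IsStdFilling α T)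
    {i : ℕ} (hi : 1 ≤ i) (hin : i < α.sum) : IsStdFilling α (swapEntries i T) := by
  rw [swapEntries_eq_swap_comp]
  refine hT.perm_comp _ (Equiv.swap_apply_of_ne_of_ne (by omega) (by omega)) fun m => ?_
  rw [Equiv.swap_apply_def]
  split_ifs <;> omega

def box (α : List ℕ) : Finset (ℕ × ℕ) :=
  Finset.range α.length ×ˢ Finset.range α.sum

lemma IsCell.mem_box {α : List ℕ} {c : ℕ × ℕ} (hc : IsCell α c) : c ∈ box α := by
  have := α.getD_le_sum c.1
  simp only [box, Finset.mem_product, Finset.mem_range]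
  exact ⟨hc.1, by have := hc.2; omega⟩

def rowWeight (α : List ℕ) (T : Filling) : ℕ :=
  ∑ c ∈ box α, c.1 * T c

lemma rowWeight_swapEntries_add {α : List ℕ} {T : Filling} {i : ℕ} {c c' : ℕ × ℕ}
    (hc : c ∈ box α) (hc' : c' ∈ box α)
    (hi : ∀ d, T d = i ↔ d = c) (hi' : ∀ d, T d = i + 1 ↔ d = c') :
    rowWeight α (swapEntries i T) + c'.1 = rowWeight α T + c.1 := by
  have pointwise : ∀ d, d.1 * swapEntries i T d + (if d = c' then d.1 else 0)
      = d.1 * T d + (if d = c then d.1 else 0) := by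
    intro d
    simp only [swapEntries]
    by_cases h : T d = i
    · have hd : d ≠ c' := fun hd => by have := (hi' d).2 hd; omega
      rw [if_pos h, if_neg hd, if_pos ((hi d).1 h), h]
      ring
    by_cases h' : T d = i + 1
    · rw [if_neg h, if_pos h', if_pos ((hi' d).1 h'), if_neg (mt (hi d).2 h), h']
      ring
    · rw [if_neg h, if_neg h', if_neg (mt (hi d).2 h), if_neg (mt (hi' d).2 h')]
  have := Finset.sum_congr rfl fun d (_ : d ∈ box α) => pointwise d
  rwa [Finset.sum_add_distrib, Finset.sum_add_distrib, Finset.sum_ite_eq',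
    Finset.sum_ite_eq', if_pos hc, if_pos hc'] at this

lemma IsStdFilling.piRS_eq_some {α : List ℕ} {T T' : Filling} (hT : IsStdFilling α T) {i : ℕ}
    (hi : 1 ≤ i) (hin : i < α.sum) (h : piRS α i (some T) = some T') :
    IsStdFilling α T' ∧ (T' = T ∨ rowWeight α T < rowWeight α T') := by
  obtain ⟨c, hc, hTc⟩ := hT.2.2.2 i hi (by omega)
  obtain ⟨c', hc', hTc'⟩ := hT.2.2.2 (i + 1) (by omega) hin
  simp only [piRS] at h
  split_ifs at h with habove hsame
  · cases h
    exact ⟨hT, .inl rfl⟩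
  · cases h
    have hbelow : c'.1 < c.1 := by
      rcases Nat.lt_trichotomy c.1 c'.1 with hlt | heq | hgt
      · exact absurd ⟨c, c', hc, hc', hTc, hTc', hlt⟩ habove
      · exact absurd ⟨c, c', hc, hc', hTc, hTc', heq⟩ hsame
      · exact hgt
    have := rowWeight_swapEntries_add hc.mem_box hc'.mem_box
      (hTc ▸ hT.apply_eq_iff hc) (hTc' ▸ hT.apply_eq_iff hc')
    exact ⟨hT.swapEntries hi hin, .inr (by omega)⟩

lemma applySeqRS_cons (α : List ℕ) (i : ℕ) (l : List ℕ) (x : Option Filling) :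
    applySeqRS α (i :: l) x = applySeqRS α l (piRS α i x) := rfl

lemma applySeqRS_append (α l₁ l₂ : List ℕ) (x : Option Filling) :
    applySeqRS α (l₁ ++ l₂) x = applySeqRS α l₂ (applySeqRS α l₁ x) :=
  List.foldl_append ..

@[simp] lemma applySeqRS_none (α l : List ℕ) : applySeqRS α l none = none := by
  induction l with
  | nil => rfl
  | cons i l ih => exact ih

lemma IsStdFilling.applySeqRS_eq_some {α : List ℕ} {T T' : Filling} (hT : IsStdFilling α T)
    {l : List ℕ} (hl : ∀ i ∈ l, 1 ≤ i ∧ i ≤ α.sum - 1) (h : applySeqRS α l (some T) = some T') :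
    IsStdFilling α T' ∧ (T' = T ∨ rowWeight α T < rowWeight α T') := by
  induction l generalizing T with
  | nil => cases h; exact ⟨hT, .inl rfl⟩
  | cons i l ih =>
    rw [applySeqRS_cons] at h
    obtain ⟨hi, hin⟩ := hl i List.mem_cons_self
    cases hU : piRS α i (some T) with
    | none => simp [hU] at h
    | some U =>
      rw [hU] at h
      obtain ⟨hU, hTU⟩ := hT.piRS_eq_some hi (by omega) hU
      obtain ⟨hT', hUT'⟩ := ih hU (fun j hj => hl j (List.mem_cons_of_mem _ hj)) h
      refine ⟨hT', ?_⟩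
      rcases hTU with rfl | hTU
      · exact hUT'
      rcases hUT' with rfl | hUT'
      exacts [.inr hTU, .inr (hTU.trans hUT')]

lemma preRS_refl (α : List ℕ) (T : Filling) : preRS α T T := ⟨[], by simp, rfl⟩

lemma preRS_trans {α : List ℕ} {T₁ T₂ T₃ : Filling} :
    preRS α T₁ T₂ → preRS α T₂ T₃ → preRS α T₁ T₃ := by
  rintro ⟨l₁, hl₁, h₁⟩ ⟨l₂, hl₂, h₂⟩
  refine ⟨l₁ ++ l₂, fun i hi => ?_, by rw [applySeqRS_append, h₁, h₂]⟩
  rcases List.mem_append.mp hi with hi | hi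
  exacts [hl₁ i hi, hl₂ i hi]

lemma preRS_antisymm {α : List ℕ} {T₁ T₂ : Filling} (hT₁ : IsStdFilling α T₁)
    (hT₂ : IsStdFilling α T₂) : preRS α T₁ T₂ → preRS α T₂ T₁ → T₁ = T₂ := by
  rintro ⟨l₁, hl₁, h₁⟩ ⟨l₂, hl₂, h₂⟩
  rcases (hT₁.applySeqRS_eq_some hl₁ h₁).2 with h | h₁₂
  · exact h.symm
  rcases (hT₂.applySeqRS_eq_some hl₂ h₂).2 with h | h₂₁
  · exact h
  omega

theorem preRS_is_partial_order_general (α : List ℕ) :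
    (∀ T, IsSIT α T → preRS α T T) ∧
    (∀ T₁ T₂ T₃, IsSIT α T₁ → IsSIT α T₂ → IsSIT α T₃ →
      preRS α T₁ T₂ → preRS α T₂ T₃ → preRS α T₁ T₃) ∧
    (∀ T₁ T₂, IsSIT α T₁ → IsSIT α T₂ → preRS α T₁ T₂ → preRS α T₂ T₁ → T₁ = T₂) :=
  ⟨fun T _ => preRS_refl α T, fun _ _ _ _ _ _ => preRS_trans,
    fun _ _ hT₁ hT₂ => preRS_antisymm hT₁.1 hT₂.1⟩

theorem preRS_is_partial_order (n : ℕ) (α : List ℕ) (hα : IsComposition α n) :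
    (∀ T, IsSIT α T → preRS α T T) ∧
    (∀ T₁ T₂ T₃, IsSIT α T₁ → IsSIT α T₂ → IsSIT α T₃ →
      preRS α T₁ T₂ → preRS α T₂ T₃ → preRS α T₁ T₃) ∧
    (∀ T₁ T₂, IsSIT α T₁ → IsSIT α T₂ → preRS α T₁ T₂ → preRS α T₂ T₁ → T₁ = T₂) :=
  preRS_is_partial_order_general α

end ImmHecke
end

section
/- Let α be a composition of n. For every T ∈ SIT(α) there exist indices i_1,…,i_r (possibly r = 0) such that successively applying π_{i_1}^{RS*},…,π_{i_r}^{RS*} to S^0_α yields T. Consequently S^0_α ≼ T for all T ∈ SIT(α), i.e. S^0_α is the unique minimal element of the poset (SIT(α), ≼). -/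
open Classical

namespace ImmHecke

section Aux
variable {α : List ℕ}

def Cw (α : List ℕ) (i : ℕ) : ℕ := ∑ r ∈ Finset.Ico i α.length, (α.getD r 0 - 1)

lemma getD_pos (hpos : ∀ a ∈ α, 0 < a) {r : ℕ} (hr : r < α.length) : 0 < α.getD r 0 := by
  rw [List.getD_eq_getElem α 0 hr]
  exact hpos _ (List.getElem_mem hr)

lemma sum_getD_range (α : List ℕ) : ∑ r ∈ Finset.range α.length, α.getD r 0 = α.sum := by
  induction α with
  | nil => simp
  | cons a l ih =>
    rw [List.length_cons, Finset.sum_range_succ']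
    simp only [List.getD_cons_succ, List.getD_cons_zero, List.sum_cons, ih]
    omega

lemma Cw_zero_add (hpos : ∀ a ∈ α, 0 < a) : Cw α 0 + α.length = α.sum := by
  have h1 : Cw α 0 + ∑ _r ∈ Finset.range α.length, 1 = ∑ r ∈ Finset.range α.length, α.getD r 0 := by
    rw [Cw, Nat.Ico_zero_eq_range, ← Finset.sum_add_distrib]
    exact Finset.sum_congr rfl fun r hr => by
      have := getD_pos hpos (Finset.mem_range.mp hr); omega
  rw [sum_getD_range] at h1
  simpa using h1

lemma length_le_sum (hpos : ∀ a ∈ α, 0 < a) : α.length ≤ α.sum := by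
  have := Cw_zero_add hpos; omega

lemma Cw_anti {i i' : ℕ} (h : i ≤ i') : Cw α i' ≤ Cw α i :=
  Finset.sum_le_sum_of_subset (Finset.Ico_subset_Ico h le_rfl)

lemma Cw_succ {i : ℕ} (h : i < α.length) : Cw α i = (α.getD i 0 - 1) + Cw α (i + 1) := by
  rw [Cw, Finset.sum_eq_sum_Ico_succ_bot h]; rfl

lemma Cw_step_le {r s : ℕ} (h : r ≤ s) (hs : s < α.length) :
    Cw α (s + 1) + (α.getD s 0 - 1) ≤ Cw α r := by
  have h1 : Cw α s = (α.getD s 0 - 1) + Cw α (s + 1) := Cw_succ hs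
  have h2 : Cw α s ≤ Cw α r := Cw_anti h
  omega

lemma listsum_filter (L i : ℕ) (f : ℕ → ℕ) :
    (((List.range L).filter fun r => i < r).map f).sum = ∑ r ∈ Finset.Ico (i+1) L, f r := by
  have key : ∀ M : ℕ, (((List.range M).filter fun r => i < r).map f).sum
      = ∑ r ∈ Finset.range M, if i < r then f r else 0 := by
    intro M
    induction M with
    | zero => simp
    | succ M ih =>
      rw [List.range_succ, List.filter_append, List.map_append, List.sum_append,
        Finset.sum_range_succ, ih]
      by_cases h : i < M <;> simp [h]
  rw [key, Finset.sum_ite, Finset.sum_const_nat (fun _ _ => rfl)]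
  simp only [add_zero, mul_zero]
  apply Finset.sum_congr _ fun _ _ => rfl
  ext a
  simp only [Finset.mem_filter, Finset.mem_range, Finset.mem_Ico]
  omega

lemma S0_not_cell {c : ℕ × ℕ} (h : ¬ IsCell α c) : S0 α c = 0 := by simp [S0, h]

lemma S0_fc {c : ℕ × ℕ} (h : IsCell α c) (h2 : c.2 = 0) : S0 α c = c.1 + 1 := by
  simp [S0, h, h2]

lemma S0_nfc {c : ℕ × ℕ} (h : IsCell α c) (h2 : c.2 ≠ 0) :
    S0 α c = α.length + Cw α (c.1 + 1) + c.2 := by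
  rw [Cw]
  simp only [S0, if_pos h, if_neg h2, listsum_filter]


lemma S0_lt_of_row_lt (hpos : ∀ a ∈ α, 0 < a) {c c' : ℕ × ℕ} (hc : IsCell α c)
    (hc' : IsCell α c') (h1 : c'.1 < c.1) (h2 : c.2 ≠ 0) (h2' : c'.2 ≠ 0) :
    S0 α c < S0 α c' := by
  rw [S0_nfc hc h2, S0_nfc hc' h2']
  have hstep : Cw α (c.1 + 1) + (α.getD c.1 0 - 1) ≤ Cw α (c'.1 + 1) :=
    Cw_step_le (by omega) hc.1
  have hj : c.2 ≤ α.getD c.1 0 - 1 := by have := hc.2; omega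
  omega

lemma S0_le_sum (hpos : ∀ a ∈ α, 0 < a) {c : ℕ × ℕ} (hc : IsCell α c) :
    1 ≤ S0 α c ∧ S0 α c ≤ α.sum := by
  have hL := Cw_zero_add (α := α) hpos
  by_cases h2 : c.2 = 0
  · rw [S0_fc hc h2]
    have := hc.1; omega
  · rw [S0_nfc hc h2]
    have h1 : Cw α c.1 ≤ Cw α 0 := Cw_anti (by omega)
    have h3 : Cw α c.1 = (α.getD c.1 0 - 1) + Cw α (c.1 + 1) := Cw_succ hc.1
    have hj : c.2 ≤ α.getD c.1 0 - 1 := by have := hc.2; omega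
    omega

lemma S0_descend (hpos : ∀ a ∈ α, 0 < a) :
    ∀ k i t : ℕ, α.length - i ≤ k → 1 ≤ t → t ≤ Cw α i →
      ∃ s, i ≤ s ∧ s < α.length ∧ Cw α (s+1) < t ∧ t ≤ Cw α (s+1) + (α.getD s 0 - 1) := by
  intro k
  induction k with
  | zero =>
    intro i t hk h1 h2
    have : Cw α i = 0 := by
      rw [Cw, Finset.Ico_eq_empty (by omega)]; simp
    omega
  | succ k ih =>
    intro i t hk h1 h2
    by_cases hiL : i < α.length
    · by_cases hc : t ≤ Cw α (i+1)
      · obtain ⟨s, hs1, hs2, hs3, hs4⟩ := ih (i+1) t (by omega) h1 hc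
        exact ⟨s, by omega, hs2, hs3, hs4⟩
      · exact ⟨i, le_rfl, hiL, by omega, by have := Cw_succ (α := α) hiL; omega⟩
    · have : Cw α i = 0 := by
        rw [Cw, Finset.Ico_eq_empty (by omega)]; simp
      omega

lemma S0_surj (hpos : ∀ a ∈ α, 0 < a) {m : ℕ} (h1 : 1 ≤ m) (h2 : m ≤ α.sum) :
    ∃ c, IsCell α c ∧ S0 α c = m := by
  have hL := Cw_zero_add (α := α) hpos
  by_cases hm : m ≤ α.length
  · refine ⟨(m - 1, 0), ⟨by omega, getD_pos hpos (by omega)⟩, ?_⟩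
    rw [S0_fc ⟨by omega, getD_pos hpos (by omega)⟩ rfl]
    simp; omega
  · obtain ⟨s, _, hs2, hs3, hs4⟩ := S0_descend hpos α.length 0 (m - α.length)
      (by omega) (by omega) (by omega)
    have hcell : IsCell α (s, m - α.length - Cw α (s+1)) := by
      constructor
      · exact hs2
      · have := getD_pos hpos hs2
        simp only; omega
    refine ⟨_, hcell, ?_⟩
    rw [S0_nfc hcell (by simp only; omega)]
    simp only; omega

lemma S0_isSIT (hpos : ∀ a ∈ α, 0 < a) : IsSIT α (S0 α) := by
  refine ⟨⟨fun c h => S0_not_cell h, fun c hc => S0_le_sum hpos hc,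
    ?_, fun m h1 h2 => S0_surj hpos h1 h2⟩, ?_, ?_⟩
  · intro c c' hc hc' heq
    by_cases h2 : c.2 = 0 <;> by_cases h2' : c'.2 = 0
    · rw [S0_fc hc h2, S0_fc hc' h2'] at heq
      exact Prod.ext (by omega) (by rw [h2, h2'])
    · exfalso
      rw [S0_fc hc h2, S0_nfc hc' h2'] at heq
      have := hc.1; omega
    · exfalso
      rw [S0_nfc hc h2, S0_fc hc' h2'] at heq
      have := hc'.1; omega
    · have h1 : c.1 = c'.1 := by
        by_contra hne
        rcases Nat.lt_or_ge c.1 c'.1 with h | h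
        · exact (Nat.ne_of_lt (S0_lt_of_row_lt hpos hc' hc h h2' h2)) heq.symm
        · exact (Nat.ne_of_lt (S0_lt_of_row_lt hpos hc hc' (by omega) h2 h2')) heq
      rw [S0_nfc hc h2, S0_nfc hc' h2', h1] at heq
      exact Prod.ext h1 (by omega)
  · intro i i' hc hc' hlt
    rw [S0_fc hc rfl, S0_fc hc' rfl]; omega
  · intro i j j' hc hc' hlt
    by_cases h2 : j = 0
    · rw [S0_fc hc h2]
      rw [S0_nfc hc' (by simp only; omega)]
      have := hc.1; simp only; omega
    · rw [S0_nfc hc (by simp only; exact h2), S0_nfc hc' (by simp only; omega)]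
      simp only; omega


lemma swap_swap (i : ℕ) (T : Filling) : swapEntries i (swapEntries i T) = T := by
  funext c
  simp only [swapEntries]
  split_ifs <;> omega

lemma swap_SIT {T : Filling} (hT : IsSIT α T) {i : ℕ} {c c' : ℕ × ℕ}
    (hc : IsCell α c) (hc' : IsCell α c') (hvc : T c = i) (hvc' : T c' = i + 1)
    (hrow : c.1 < c'.1) (hfc : ¬(c.2 = 0 ∧ c'.2 = 0)) : IsSIT α (swapEntries i T) := by
  obtain ⟨⟨h0, hb, hinj, hsurj⟩, hcol, hrw⟩ := hT
  have hi1 : 1 ≤ i := by have := (hb c hc).1; omega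
  have hin : i + 1 ≤ α.sum := by have := (hb c' hc').2; omega
  have hflt : ∀ d d' : ℕ × ℕ, IsCell α d → IsCell α d' → T d < T d' →
      ¬(d = c ∧ d' = c') → swapEntries i T d < swapEntries i T d' := by
    intro d d' hd hd' hlt hne
    have : ¬(T d = i ∧ T d' = i + 1) := by
      rintro ⟨e1, e2⟩
      exact hne ⟨hinj d c hd hc (by omega), hinj d' c' hd' hc' (by omega)⟩
    simp only [swapEntries]
    split_ifs <;> omega
  refine ⟨⟨?_, ?_, ?_, ?_⟩, ?_, ?_⟩
  · intro d hd
    have := h0 d hd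
    simp only [swapEntries]
    split_ifs <;> omega
  · intro d hd
    have := hb d hd
    simp only [swapEntries]
    split_ifs <;> omega
  · intro d d' hd hd' heq
    apply hinj d d' hd hd'
    simp only [swapEntries] at heq
    split_ifs at heq <;> omega
  · intro m h1 h2
    by_cases hmi : m = i
    · exact ⟨c', hc', by simp only [swapEntries, hvc']; split_ifs <;> omega⟩
    by_cases hmi1 : m = i + 1
    · exact ⟨c, hc, by simp only [swapEntries, hvc]; split_ifs <;> omega⟩
    obtain ⟨d, hd, hdm⟩ := hsurj m h1 h2
    exact ⟨d, hd, by simp only [swapEntries, hdm]; split_ifs <;> omega⟩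
  · intro r r' hd hd' hlt
    apply hflt _ _ hd hd' (hcol r r' hd hd' hlt)
    rintro ⟨e1, e2⟩
    rw [← e1, ← e2] at hfc
    exact hfc ⟨rfl, rfl⟩
  · intro r j j' hd hd' hlt
    apply hflt _ _ hd hd' (hrw r j j' hd hd' hlt)
    rintro ⟨e1, e2⟩
    rw [← e1, ← e2] at hrow
    exact absurd hrow (by simp)

lemma piRS_of_below {T : Filling} (hT : IsSIT α T) {i : ℕ} {c c' : ℕ × ℕ}
    (hc : IsCell α c) (hc' : IsCell α c') (hvc : T c = i) (hvc' : T c' = i + 1)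
    (hrow : c'.1 < c.1) :
    piRS α i (some T) = some (swapEntries i T) := by
  obtain ⟨⟨h0, hb, hinj, hsurj⟩, hcol, hrw⟩ := hT
  have hnA : ¬ SuccAbove α T i := by
    rintro ⟨d, d', hd, hd', hv1, hv2, hlt⟩
    have e1 : d = c := hinj d c hd hc (by omega)
    have e2 : d' = c' := hinj d' c' hd' hc' (by omega)
    rw [e1, e2] at hlt; omega
  have hnS : ¬ SuccSameRow α T i := by
    rintro ⟨d, d', hd, hd', hv1, hv2, hlt⟩
    have e1 : d = c := hinj d c hd hc (by omega)
    have e2 : d' = c' := hinj d' c' hd' hc' (by omega)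
    rw [e1, e2] at hlt; omega
  simp only [piRS, if_neg hnA, if_neg hnS]


noncomputable def rowOf (α : List ℕ) (T : Filling) (m : ℕ) : ℕ :=
  if h : ∃ c, IsCell α c ∧ T c = m then (Classical.choose h).1 else 0

lemma rowOf_eq {T : Filling} (hinj : ∀ c c', IsCell α c → IsCell α c' → T c = T c' → c = c')
    {m : ℕ} {e : ℕ × ℕ} (he : IsCell α e) (hv : T e = m) : rowOf α T m = e.1 := by
  have h : ∃ c, IsCell α c ∧ T c = m := ⟨e, he, hv⟩
  rw [rowOf, dif_pos h]
  obtain ⟨h1, h2⟩ := Classical.choose_spec h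
  rw [hinj _ e h1 he (by rw [h2, hv])]

noncomputable def phi (α : List ℕ) (T : Filling) : ℕ :=
  ∑ m ∈ Finset.range (α.sum + 1), m * rowOf α T m

lemma rowOf_swap_ne {T : Filling} {i m : ℕ}
    (hinj : ∀ c c', IsCell α c → IsCell α c' → T c = T c' → c = c')
    (hswinj : ∀ c c', IsCell α c → IsCell α c' → swapEntries i T c = swapEntries i T c' → c = c')
    (hmi : m ≠ i) (hmi1 : m ≠ i + 1) :
    rowOf α (swapEntries i T) m = rowOf α T m := by
  have hiff : ∀ c, swapEntries i T c = m ↔ T c = m := by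
    intro c
    simp only [swapEntries]
    split_ifs <;> omega
  by_cases h : ∃ c, IsCell α c ∧ T c = m
  · obtain ⟨c, hc, hv⟩ := h
    rw [rowOf_eq hswinj hc ((hiff c).mpr hv), rowOf_eq hinj hc hv]
  · have h' : ¬ ∃ c, IsCell α c ∧ swapEntries i T c = m := by
      rintro ⟨c, hc, hv⟩
      exact h ⟨c, hc, (hiff c).mp hv⟩
    rw [rowOf, rowOf, dif_neg h, dif_neg h']

lemma phi_swap_lt {T : Filling} (hT : IsSIT α T) {i : ℕ} {c c' : ℕ × ℕ}
    (hc : IsCell α c) (hc' : IsCell α c') (hvc : T c = i) (hvc' : T c' = i + 1)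
    (hrow : c.1 < c'.1) :
    phi α (swapEntries i T) < phi α T := by
  obtain ⟨⟨h0, hb, hinj, hsurj⟩, hcol, hrw⟩ := hT
  have hswinj : ∀ d d', IsCell α d → IsCell α d' → swapEntries i T d = swapEntries i T d' → d = d' := by
    intro d d' hd hd' heq
    apply hinj d d' hd hd'
    simp only [swapEntries] at heq
    split_ifs at heq <;> omega
  have hvc2 : swapEntries i T c = i + 1 := by simp only [swapEntries, hvc]; simp
  have hvc2' : swapEntries i T c' = i := by
    simp only [swapEntries, hvc']
    split_ifs <;> omega
  have hr1 : rowOf α T i = c.1 := rowOf_eq hinj hc hvc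
  have hr2 : rowOf α T (i+1) = c'.1 := rowOf_eq hinj hc' hvc'
  have hr3 : rowOf α (swapEntries i T) i = c'.1 := rowOf_eq hswinj hc' hvc2'
  have hr4 : rowOf α (swapEntries i T) (i+1) = c.1 := rowOf_eq hswinj hc hvc2
  have hi1 : 1 ≤ i := by have := (hb c hc).1; omega
  have hin : i + 1 ≤ α.sum := by have := (hb c' hc').2; omega
  set s := Finset.range (α.sum + 1) with hs
  have hmem1 : i + 1 ∈ s := by simp [hs]; omega
  have hmem0 : i ∈ s.erase (i+1) := by simp [hs]; omega
  have key : ∀ U : Filling, phi α U = ∑ m ∈ (s.erase (i+1)).erase i, m * rowOf α U m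
      + i * rowOf α U i + (i+1) * rowOf α U (i+1) := by
    intro U
    rw [phi, ← Finset.sum_erase_add s _ hmem1, ← Finset.sum_erase_add _ _ hmem0]
  have hcongr : ∑ m ∈ (s.erase (i+1)).erase i, m * rowOf α (swapEntries i T) m
      = ∑ m ∈ (s.erase (i+1)).erase i, m * rowOf α T m := by
    apply Finset.sum_congr rfl
    intro m hm
    simp only [Finset.mem_erase] at hm
    rw [rowOf_swap_ne hinj hswinj hm.1 hm.2.1]
  rw [key T, key (swapEntries i T), hcongr, hr1, hr2, hr3, hr4]
  have e1 : (i+1) * c'.1 = i * c'.1 + c'.1 := by ring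
  have e2 : (i+1) * c.1 = i * c.1 + c.1 := by ring
  omega


lemma eq_S0_of_no_move (hpos : ∀ a ∈ α, 0 < a) {T : Filling} (hT : IsSIT α T)
    (H : ∀ i, SuccAbove α T i → BothFirstColumn α T i) : T = S0 α := by
  obtain ⟨⟨hT0, hTb, hTinj, hTsurj⟩, hTfc, hTrow⟩ := hT
  have hL := Cw_zero_add (α := α) hpos
  have key : ∀ m, 1 ≤ m → m ≤ α.sum → ∀ c, IsCell α c → S0 α c = m → T c = m := by
    intro m
    induction m using Nat.strong_induction_on with
    | _ m IH =>
    intro hm1 hmn c hc hcm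
    have D1 : ∀ e, IsCell α e → T e < m → S0 α e = T e := by
      intro e he hlt
      have h1 : 1 ≤ T e := (hTb e he).1
      have h2 : T e ≤ α.sum := (hTb e he).2
      obtain ⟨e', he', hse'⟩ := S0_surj hpos h1 h2
      have hTe' : T e' = T e := IH (T e) hlt h1 h2 e' he' hse'
      rw [hTinj e e' he he' hTe'.symm, hse', hTe']
    have D2 : ∀ e, IsCell α e → m ≤ T e → m ≤ S0 α e := by
      intro e he hme
      by_contra h
      push_neg at h
      have h1 : 1 ≤ S0 α e := (S0_le_sum hpos he).1
      have := IH (S0 α e) h h1 (by omega) e he rfl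
      omega
    have hk : m ≤ T c := by
      by_contra h
      push_neg at h
      have := D1 c hc h
      omega
    rcases eq_or_lt_of_le hk with heq | hlt
    · omega
    exfalso
    set k := T c with hkdef
    have hkn : k ≤ α.sum := (hTb c hc).2
    obtain ⟨e, he, hek⟩ := hTsurj (k-1) (by omega) (by omega)
    have hSe : m ≤ S0 α e := D2 e he (by omega)
    have hec : e ≠ c := by
      intro h
      rw [h, ← hkdef] at hek
      omega
    have hksucc : k - 1 + 1 = k := by omega
    by_cases hmL : m ≤ α.length
    · -- c = (m-1, 0)
      have hc2 : c.2 = 0 := by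
        by_contra h2
        have := S0_nfc hc h2
        omega
      have hc1 : c.1 + 1 = m := by
        have := S0_fc hc hc2
        omega
      by_cases hA : e.1 < c.1
      · have hSA : SuccAbove α T (k-1) := ⟨e, c, he, hc, hek, by omega, hA⟩
        obtain ⟨d, d', hd, hd', hvd, hvd', hd2, hd'2⟩ := H _ hSA
        have hde : d = e := hTinj d e hd he (by omega)
        have he2 : e.2 = 0 := by rw [← hde]; exact hd2
        have := S0_fc he he2
        omega
      · push_neg at hA
        have hcc : c = (c.1, 0) := by rw [← hc2]
        by_cases he2 : e.2 = 0
        · have hee : e = (e.1, 0) := by rw [← he2]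
          have hne : c.1 < e.1 := by
            rcases eq_or_lt_of_le hA with h | h
            · exfalso; exact hec (by rw [hee, hcc, h])
            · exact h
          have := hTfc c.1 e.1 (hcc ▸ hc) (hee ▸ he) hne
          rw [← hcc, ← hee, ← hkdef, hek] at this
          omega
        · have hcell0 : IsCell α (e.1, 0) := ⟨he.1, getD_pos hpos he.1⟩
          have hee : e = (e.1, e.2) := rfl
          have h1 : T (e.1, 0) < T e := by
            have := hTrow e.1 0 e.2 hcell0 (hee ▸ he) (by omega)
            exact hee ▸ this
          have h2 : T (c.1, 0) ≤ T (e.1, 0) := by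
            rcases eq_or_lt_of_le hA with h | h
            · rw [h]
            · exact le_of_lt (hTfc c.1 e.1 (hcc ▸ hc) hcell0 h)
          rw [← hcc, ← hkdef] at h2
          omega
    · -- m > length: c = (r, j) with j ≥ 1
      have hc2 : c.2 ≠ 0 := by
        intro h2
        have := S0_fc hc h2
        have := hc.1
        omega
      have hform : S0 α c = α.length + Cw α (c.1 + 1) + c.2 := S0_nfc hc hc2
      have he2 : e.2 ≠ 0 := by
        intro h2
        have := S0_fc he h2
        have := he.1
        omega
      have heform : S0 α e = α.length + Cw α (e.1 + 1) + e.2 := S0_nfc he he2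
      by_cases hA : e.1 < c.1
      · have hSA : SuccAbove α T (k-1) := ⟨e, c, he, hc, hek, by omega, hA⟩
        obtain ⟨d, d', hd, hd', hvd, hvd', hd2, hd'2⟩ := H _ hSA
        have hdc : d' = c := hTinj d' c hd' hc (by omega)
        rw [hdc] at hd'2
        exact hc2 hd'2
      · push_neg at hA
        rcases eq_or_lt_of_le hA with h | h
        · -- same row
          have he2' : c.2 < e.2 := by
            have : c.2 ≤ e.2 := by rw [← h] at heform; omega
            have hne : c.2 ≠ e.2 := by
              intro hh
              exact hec (Prod.ext h.symm hh.symm)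
            omega
          have hthis := hTrow c.1 c.2 e.2 hc (by rw [h]; exact he) he2'
          have h5 : T c < T e := by
            rw [show ((c.1, e.2) : ℕ × ℕ) = e from by rw [h]] at hthis
            exact hthis
          omega
        · -- e strictly above c
          have hstep : Cw α (e.1 + 1) + (α.getD e.1 0 - 1) ≤ Cw α (c.1 + 1) :=
            Cw_step_le (by omega) he.1
          have hj : e.2 ≤ α.getD e.1 0 - 1 := by
            have := he.2
            have := getD_pos hpos he.1
            omega
          omega
  funext c
  by_cases h : IsCell α c
  · have hb := S0_le_sum hpos h
    exact key (S0 α c) hb.1 hb.2 c h rfl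
  · rw [hT0 c h, S0_not_cell h]


lemma reach (hpos : ∀ a ∈ α, 0 < a) :
    ∀ N T, IsSIT α T → phi α T < N → preRS α (S0 α) T := by
  intro N
  induction N with
  | zero => intro T _ h; omega
  | succ N IH =>
    intro T hT hphi
    by_cases hTS : T = S0 α
    · exact ⟨[], by simp, by rw [hTS]; rfl⟩
    · have hex : ∃ i, SuccAbove α T i ∧ ¬ BothFirstColumn α T i := by
        by_contra hno
        push_neg at hno
        exact hTS (eq_S0_of_no_move hpos hT hno)
      obtain ⟨i, hSA, hnB⟩ := hex
      obtain ⟨c, c', hc, hc', hvc, hvc', hrow⟩ := hSA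
      have hfc : ¬(c.2 = 0 ∧ c'.2 = 0) := fun ⟨h1, h2⟩ =>
        hnB ⟨c, c', hc, hc', hvc, hvc', h1, h2⟩
      have hT' : IsSIT α (swapEntries i T) := swap_SIT hT hc hc' hvc hvc' hrow hfc
      have hlt : phi α (swapEntries i T) < phi α T := phi_swap_lt hT hc hc' hvc hvc' hrow
      obtain ⟨l, hl1, hl2⟩ := IH (swapEntries i T) hT' (by omega)
      have hswc : swapEntries i T c = i + 1 := by simp [swapEntries, hvc]
      have hswc' : swapEntries i T c' = i := by
        simp only [swapEntries, hvc']
        split_ifs <;> omega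
      have hpi : piRS α i (some (swapEntries i T)) = some T := by
        rw [piRS_of_below hT' hc' hc hswc' hswc hrow, swap_swap]
      refine ⟨l ++ [i], ?_, ?_⟩
      · intro x hx
        rcases List.mem_append.mp hx with h | h
        · exact hl1 x h
        · have hxi : x = i := by simpa using h
          subst hxi
          have h1 := (hT.1.2.1 c hc).1
          have h2 := (hT.1.2.1 c' hc').2
          rw [hvc] at h1
          rw [hvc'] at h2
          omega
      · have happ : applySeqRS α (l ++ [i]) (some (S0 α))
            = piRS α i (applySeqRS α l (some (S0 α))) := by
          simp [applySeqRS, List.foldl_append]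
        rw [happ, hl2, hpi]

end Aux

theorem S0_unique_minimal (n : ℕ) (α : List ℕ) (hα : IsComposition α n) :
    IsSIT α (S0 α) ∧
    (∀ T, IsSIT α T → preRS α (S0 α) T) ∧
    (∀ M, IsSIT α M → (∀ T, IsSIT α T → preRS α T M → T = M) → M = S0 α) := by
  obtain ⟨hpos, -⟩ := hα
  exact ⟨S0_isSIT hpos, fun T hT => reach hpos (phi α T + 1) T hT (by omega),
    fun M hM hmin => (hmin (S0 α) (S0_isSIT hpos)
      (reach hpos (phi α M + 1) M hM (by omega))).symm⟩

end ImmHecke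
end
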